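/- arXiv:2212.00084 — 4 statements merged into one kernel-verified Lean document; each statement's English description precedes it below -/
import Mathlib

section
/- (Performance difference lemma.) For any pair of stable policies K' and K, J(K') − J(K) = 2Tr(Σ_{K'}(K'−K)ᵀE_K) + Tr(Σ_{K'}(K'−K)ᵀ(R + BᵀP_KB)(K'−K)). -/
/-!
Both sides are linear in `Σ_{K'}`, so the cost difference is paired against the Lyapunov
equation of `Σ_{K'}`: by cyclicity of the trace, `X ↦ X - Lᵀ X L` is the adjoint of
`S ↦ S - L S Lᵀ`, which turns `Tr((P_{K'} - P_K) W)`, with `W = Ψ + σ²BBᵀ`, into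
`Tr(D Σ_{K'})` where `D = (P_{K'} - P_K) - L'ᵀ (P_{K'} - P_K) L'` and `L' = A - BK'`.
By the two Bellman equations, `D` is the change of the one-step Bellman operator at `P_K`
when `K` is replaced by `K'`, and completing the square in `K' - K` writes it through `E_K`.
-/

open Matrix Finset

noncomputable def specRad {d : ℕ} (M : Matrix (Fin d) (Fin d) ℝ) : ℝ :=
  sSup {r : ℝ | ∃ z ∈ spectrum ℂ (M.map Complex.ofReal), r = ‖z‖}

noncomputable def sNorm {m n : Type*} [Fintype m] [Fintype n] [DecidableEq n]
    (M : Matrix m n ℝ) : ℝ :=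
  ‖LinearMap.toContinuousLinearMap (Matrix.toEuclideanLin M)‖

noncomputable def frobNorm {m n : Type*} [Fintype m] [Fintype n] (M : Matrix m n ℝ) : ℝ :=
  Real.sqrt (∑ i, ∑ j, (M i j) ^ 2)

noncomputable def minEig {m : Type*} [Fintype m] (M : Matrix m m ℝ) : ℝ :=
  sInf {r : ℝ | ∃ v : m → ℝ, v ≠ 0 ∧ M.mulVec v = r • v}

namespace Matrix

variable {ι κ α : Type*} [Fintype ι] [Fintype κ] [CommRing α]

theorem trace_mul_sub_sandwich (X L S M : Matrix ι ι α) :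
    (X * (S - L * S * M)).trace = ((X - M * X * L) * S).trace := by
  have hcycle : (X * (L * S * M)).trace = (M * X * L * S).trace := by
    rw [← Matrix.mul_assoc, ← Matrix.mul_assoc, trace_mul_comm]
    simp only [Matrix.mul_assoc]
  rw [Matrix.mul_sub, Matrix.sub_mul, trace_sub, trace_sub, hcycle]

def bellman (Q : Matrix ι ι α) (R : Matrix κ κ α) (A : Matrix ι ι α) (B : Matrix ι κ α)
    (K : Matrix κ ι α) (P : Matrix ι ι α) : Matrix ι ι α :=
  Q + Kᵀ * R * K + (A - B * K)ᵀ * P * (A - B * K)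

theorem bellman_sub_bellman {Q P A : Matrix ι ι α} {R : Matrix κ κ α} {B : Matrix ι κ α}
    (hP : P.IsSymm) (hR : R.IsSymm) (K K' : Matrix κ ι α) :
    bellman Q R A B K' P - bellman Q R A B K P
      = (K' - K)ᵀ * (R + Bᵀ * P * B) * (K' - K)
        + (K' - K)ᵀ * ((R + Bᵀ * P * B) * K - Bᵀ * P * A)
        + ((R + Bᵀ * P * B) * K - Bᵀ * P * A)ᵀ * (K' - K) := by
  simp only [bellman, transpose_sub, transpose_add, transpose_mul, transpose_transpose,
    hP.eq, hR.eq, Matrix.sub_mul, Matrix.mul_sub, Matrix.add_mul, Matrix.mul_add,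
    Matrix.mul_assoc]
  abel

theorem sub_sub_conj_eq_bellman_sub {Q P P' A : Matrix ι ι α} {R : Matrix κ κ α}
    {B : Matrix ι κ α} {K K' : Matrix κ ι α}
    (hP : P = bellman Q R A B K P) (hP' : P' = bellman Q R A B K' P') :
    P' - P - (A - B * K')ᵀ * (P' - P) * (A - B * K')
      = bellman Q R A B K' P - bellman Q R A B K P := by
  rw [← hP]
  nth_rw 1 [hP']
  simp only [bellman, Matrix.mul_sub, Matrix.sub_mul]
  abel

theorem trace_completed_square_mul {S : Matrix ι ι α} (hS : S.IsSymm)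
    (D : Matrix κ ι α) (G : Matrix κ κ α) (E : Matrix κ ι α) :
    ((Dᵀ * G * D + Dᵀ * E + Eᵀ * D) * S).trace
      = 2 * (S * Dᵀ * E).trace + (S * Dᵀ * G * D).trace := by
  have hEDS : (Eᵀ * D * S).trace = (S * Dᵀ * E).trace := by
    rw [← trace_transpose]
    simp only [transpose_mul, transpose_transpose, hS.eq, Matrix.mul_assoc]
  rw [Matrix.add_mul, Matrix.add_mul, trace_add, trace_add, hEDS, trace_mul_comm _ S,
    trace_mul_comm _ S]
  simp only [Matrix.mul_assoc]
  ring

end Matrix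

theorem stmt_2_general {n k : ℕ}
    (A : Matrix (Fin n) (Fin n) ℝ) (B : Matrix (Fin n) (Fin k) ℝ)
    (Q Ψ : Matrix (Fin n) (Fin n) ℝ) (R : Matrix (Fin k) (Fin k) ℝ)
    (σ : ℝ) (hR : R.PosDef)
    (K K' : Matrix (Fin k) (Fin n) ℝ)
    -- P_K, value matrix for K
    (P : Matrix (Fin n) (Fin n) ℝ) (hP : P.PosDef)
    (hPeq : P = Q + Kᵀ * R * K + (A - B * K)ᵀ * P * (A - B * K))
    -- P_{K'}, value matrix for K'
    (P' : Matrix (Fin n) (Fin n) ℝ)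
    (hP'eq : P' = Q + K'ᵀ * R * K' + (A - B * K')ᵀ * P' * (A - B * K'))
    -- Σ_{K'}, state covariance for K'
    (Sg' : Matrix (Fin n) (Fin n) ℝ) (hSg' : Sg'.PosDef)
    (hSg'eq : Sg' = (Ψ + σ ^ 2 • (B * Bᵀ)) + (A - B * K') * Sg' * (A - B * K')ᵀ) :
    (P' * (Ψ + σ ^ 2 • (B * Bᵀ))).trace - (P * (Ψ + σ ^ 2 • (B * Bᵀ))).trace
      = 2 * (Sg' * (K' - K)ᵀ * ((R + Bᵀ * P * B) * K - Bᵀ * P * A)).trace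
        + (Sg' * (K' - K)ᵀ * (R + Bᵀ * P * B) * (K' - K)).trace := by
  have hW : Ψ + σ ^ 2 • (B * Bᵀ) = Sg' - (A - B * K') * Sg' * (A - B * K')ᵀ :=
    eq_sub_of_add_eq hSg'eq.symm
  have hPsymm : P.IsSymm := isHermitian_iff_isSymm.mp hP.isHermitian
  have hRsymm : R.IsSymm := isHermitian_iff_isSymm.mp hR.isHermitian
  have hSsymm : Sg'.IsSymm := isHermitian_iff_isSymm.mp hSg'.isHermitian
  rw [← trace_sub, ← Matrix.sub_mul, hW, trace_mul_sub_sandwich,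
    sub_sub_conj_eq_bellman_sub (Q := Q) (R := R) hPeq hP'eq,
    bellman_sub_bellman hPsymm hRsymm, trace_completed_square_mul hSsymm]

/-- Performance difference lemma: for stable policies `K'`, `K`,
`J(K') − J(K) = 2Tr(Σ_{K'}(K'−K)ᵀE_K) + Tr(Σ_{K'}(K'−K)ᵀ(R + BᵀP_KB)(K'−K))`. -/
theorem stmt_2 {n k : ℕ} (hn : 0 < n) (hk : 0 < k)
    (A : Matrix (Fin n) (Fin n) ℝ) (B : Matrix (Fin n) (Fin k) ℝ)
    (Q Ψ : Matrix (Fin n) (Fin n) ℝ) (R : Matrix (Fin k) (Fin k) ℝ)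
    (σ : ℝ) (hσ : 0 < σ) (hQ : Q.PosDef) (hR : R.PosDef) (hΨ : Ψ.PosDef)
    (K K' : Matrix (Fin k) (Fin n) ℝ)
    (hK : specRad (A - B * K) < 1) (hK' : specRad (A - B * K') < 1)
    -- P_K, value matrix for K
    (P : Matrix (Fin n) (Fin n) ℝ) (hP : P.PosDef)
    (hPeq : P = Q + Kᵀ * R * K + (A - B * K)ᵀ * P * (A - B * K))
    -- P_{K'}, value matrix for K'
    (P' : Matrix (Fin n) (Fin n) ℝ) (hP' : P'.PosDef)
    (hP'eq : P' = Q + K'ᵀ * R * K' + (A - B * K')ᵀ * P' * (A - B * K'))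
    -- Σ_{K'}, state covariance for K'
    (Sg' : Matrix (Fin n) (Fin n) ℝ) (hSg' : Sg'.PosDef)
    (hSg'eq : Sg' = (Ψ + σ ^ 2 • (B * Bᵀ)) + (A - B * K') * Sg' * (A - B * K')ᵀ) :
    (P' * (Ψ + σ ^ 2 • (B * Bᵀ))).trace - (P * (Ψ + σ ^ 2 • (B * Bᵀ))).trace
      = 2 * (Sg' * (K' - K)ᵀ * ((R + Bᵀ * P * B) * K - Bᵀ * P * A)).trace
        + (Sg' * (K' - K)ᵀ * (R + Bᵀ * P * B) * (K' - K)).trace :=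
  stmt_2_general A B Q Ψ R σ hR K K' P hP hPeq P' hP'eq Sg' hSg' hSg'eq
end

section
/- (Generalized monotonicity of the natural-gradient variational inequality.) For any stable policy K, 2Tr(Σ_{K*}(K − K*)ᵀE_K) ≥ J(K) − J(K*) ≥ 0. -/
/-!
Write `E_K` for the natural gradient and `Δ = K - K*`. Subtracting the two Lyapunov equations
and completing the square in `K` gives the cost-difference identity
`P_K - P_{K*} - L*ᵀ (P_K - P_{K*}) L* = Δᵀ E_K + E_Kᵀ Δ - Δᵀ (R + Bᵀ P_K B) Δ`, `L* = A - B K*`.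
Pairing it with `Σ_{K*}`, which solves the dual Lyapunov equation, turns the left side into
`J(K) - J(K*)`; the quadratic term has nonnegative trace against `Σ_{K*}`, which yields the first
inequality. The second is the optimality of `K*`.
-/

open Matrix Finset

open scoped MatrixOrder ComplexOrder in
theorem Matrix.PosSemidef.trace_mul_nonneg {𝕜 ι : Type*} [RCLike 𝕜] [Fintype ι] [DecidableEq ι]
    {S X : Matrix ι ι 𝕜} (hS : S.PosSemidef) (hX : X.PosSemidef) : 0 ≤ (S * X).trace := by
  obtain ⟨C, rfl⟩ := CStarAlgebra.nonneg_iff_eq_star_mul_self.mp hS.nonneg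
  rw [star_eq_conjTranspose, Matrix.mul_assoc, trace_mul_comm]
  exact (hX.mul_mul_conjTranspose_same C).trace_nonneg

section
variable {α ι κ : Type*} [CommRing α] [Fintype ι] [Fintype κ]

def natGrad (A : Matrix ι ι α) (B : Matrix ι κ α) (R : Matrix κ κ α) (P : Matrix ι ι α)
    (K : Matrix κ ι α) : Matrix κ ι α :=
  (R + Bᵀ * P * B) * K - Bᵀ * P * A

theorem lyapunov_sub_sub_conj_eq_natGrad {A Q P P' : Matrix ι ι α} {B : Matrix ι κ α}
    {R : Matrix κ κ α} {K K' : Matrix κ ι α} (hR : R.IsSymm) (hP : P.IsSymm)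
    (hPeq : P = Q + Kᵀ * R * K + (A - B * K)ᵀ * P * (A - B * K))
    (hP'eq : P' = Q + K'ᵀ * R * K' + (A - B * K')ᵀ * P' * (A - B * K')) :
    P - P' - (A - B * K')ᵀ * (P - P') * (A - B * K')
      = (K - K')ᵀ * natGrad A B R P K + (natGrad A B R P K)ᵀ * (K - K')
        - (K - K')ᵀ * (R + Bᵀ * P * B) * (K - K') := by
  have hQ : Q = P - Kᵀ * R * K - (A - B * K)ᵀ * P * (A - B * K) := by
    rw [sub_sub, eq_sub_iff_add_eq, ← add_assoc]; exact hPeq.symm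
  have hP' : P' - (A - B * K')ᵀ * P' * (A - B * K') = Q + K'ᵀ * R * K' :=
    sub_eq_iff_eq_add.mpr hP'eq
  have hsplit : P - P' - (A - B * K')ᵀ * (P - P') * (A - B * K')
      = P - (P' - (A - B * K')ᵀ * P' * (A - B * K')) - (A - B * K')ᵀ * P * (A - B * K') := by
    noncomm_ring
  rw [hsplit, hP', hQ, natGrad]
  simp only [transpose_sub, transpose_mul, transpose_add, transpose_transpose, hR.eq, hP.eq,
    Matrix.sub_mul, Matrix.mul_sub, Matrix.add_mul, Matrix.mul_add, Matrix.mul_assoc]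
  abel

theorem trace_mul_eq_trace_sub_conj_mul {W X L S : Matrix ι ι α}
    (hS : S = W + L * S * Lᵀ) : (X * W).trace = ((X - Lᵀ * X * L) * S).trace := by
  rw [eq_sub_of_add_eq hS.symm, Matrix.mul_sub, Matrix.sub_mul, trace_sub, trace_sub,
    ← Matrix.mul_assoc, ← Matrix.mul_assoc, trace_mul_cycle]
  simp only [Matrix.mul_assoc]

end

section
variable {ι κ : Type*} [Fintype ι] [Fintype κ] [DecidableEq ι]

theorem trace_sub_mul_le_two_trace_natGrad {A Q P P' S' W : Matrix ι ι ℝ}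
    {B : Matrix ι κ ℝ} {R : Matrix κ κ ℝ} {K K' : Matrix κ ι ℝ}
    (hR : R.PosSemidef) (hP : P.PosSemidef) (hS' : S'.PosSemidef)
    (hPeq : P = Q + Kᵀ * R * K + (A - B * K)ᵀ * P * (A - B * K))
    (hP'eq : P' = Q + K'ᵀ * R * K' + (A - B * K')ᵀ * P' * (A - B * K'))
    (hS'eq : S' = W + (A - B * K') * S' * (A - B * K')ᵀ) :
    ((P - P') * W).trace ≤ 2 * (S' * (K - K')ᵀ * natGrad A B R P K).trace := by
  set D := K - K'
  set E := natGrad A B R P K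
  set G := R + Bᵀ * P * B
  have hG : G.PosSemidef := by
    simpa only [conjTranspose_eq_transpose_of_trivial] using
      hR.add (hP.conjTranspose_mul_mul_same B)
  have hquad : 0 ≤ (Dᵀ * G * D * S').trace := by
    simpa only [conjTranspose_eq_transpose_of_trivial] using
      (hG.conjTranspose_mul_mul_same D).trace_mul_nonneg hS'
  have hcross : (Eᵀ * D * S').trace = (S' * Dᵀ * E).trace := by
    rw [← trace_transpose]
    simp only [transpose_mul, transpose_transpose, (isHermitian_iff_isSymm.mp hS'.isHermitian).eq,
      Matrix.mul_assoc]
  calc ((P - P') * W).trace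
      = ((P - P' - (A - B * K')ᵀ * (P - P') * (A - B * K')) * S').trace :=
        trace_mul_eq_trace_sub_conj_mul hS'eq
    _ = ((Dᵀ * E + Eᵀ * D - Dᵀ * G * D) * S').trace := by
        rw [lyapunov_sub_sub_conj_eq_natGrad (isHermitian_iff_isSymm.mp hR.isHermitian)
          (isHermitian_iff_isSymm.mp hP.isHermitian) hPeq hP'eq]
    _ = 2 * (S' * Dᵀ * E).trace - (Dᵀ * G * D * S').trace := by
        rw [Matrix.sub_mul, Matrix.add_mul, trace_sub, trace_add, hcross, trace_mul_cycle]
        ring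
    _ ≤ 2 * (S' * Dᵀ * E).trace := sub_le_self _ hquad

end

theorem stmt_4_general {n k : ℕ}
    (A : Matrix (Fin n) (Fin n) ℝ) (B : Matrix (Fin n) (Fin k) ℝ)
    (Q Ψ : Matrix (Fin n) (Fin n) ℝ) (R : Matrix (Fin k) (Fin k) ℝ)
    (σ : ℝ) (hR : R.PosDef)
    -- the stable policy K and its value matrix
    (K : Matrix (Fin k) (Fin n) ℝ) (hK : specRad (A - B * K) < 1)
    (P : Matrix (Fin n) (Fin n) ℝ) (hP : P.PosDef)
    (hPeq : P = Q + Kᵀ * R * K + (A - B * K)ᵀ * P * (A - B * K))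
    -- the optimal stable policy K*, its value matrix and state covariance
    (Kstar : Matrix (Fin k) (Fin n) ℝ)
    (Pstar : Matrix (Fin n) (Fin n) ℝ)
    (hPstarEq : Pstar = Q + Kstarᵀ * R * Kstar
      + (A - B * Kstar)ᵀ * Pstar * (A - B * Kstar))
    (Sgstar : Matrix (Fin n) (Fin n) ℝ) (hSgstar : Sgstar.PosDef)
    (hSgstarEq : Sgstar = (Ψ + σ ^ 2 • (B * Bᵀ))
      + (A - B * Kstar) * Sgstar * (A - B * Kstar)ᵀ)
    -- K* minimizes J over all stable policies
    (hmin : ∀ (K' : Matrix (Fin k) (Fin n) ℝ) (P' : Matrix (Fin n) (Fin n) ℝ),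
      specRad (A - B * K') < 1 → P'.PosDef →
      P' = Q + K'ᵀ * R * K' + (A - B * K')ᵀ * P' * (A - B * K') →
      (Pstar * (Ψ + σ ^ 2 • (B * Bᵀ))).trace ≤ (P' * (Ψ + σ ^ 2 • (B * Bᵀ))).trace) :
    2 * (Sgstar * (K - Kstar)ᵀ * ((R + Bᵀ * P * B) * K - Bᵀ * P * A)).trace
      ≥ (P * (Ψ + σ ^ 2 • (B * Bᵀ))).trace - (Pstar * (Ψ + σ ^ 2 • (B * Bᵀ))).trace
    ∧ (P * (Ψ + σ ^ 2 • (B * Bᵀ))).trace - (Pstar * (Ψ + σ ^ 2 • (B * Bᵀ))).trace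
      ≥ 0 := by
  have hgap := trace_sub_mul_le_two_trace_natGrad hR.posSemidef hP.posSemidef
    hSgstar.posSemidef hPeq hPstarEq hSgstarEq
  rw [Matrix.sub_mul, trace_sub] at hgap
  exact ⟨hgap, sub_nonneg.mpr (hmin K P hK hP hPeq)⟩

/-- Generalized monotonicity of the natural-gradient VI:
for any stable policy `K`, `2Tr(Σ_{K*}(K − K*)ᵀE_K) ≥ J(K) − J(K*) ≥ 0`. -/
theorem stmt_4 {n k : ℕ} (hn : 0 < n) (hk : 0 < k)
    (A : Matrix (Fin n) (Fin n) ℝ) (B : Matrix (Fin n) (Fin k) ℝ)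
    (Q Ψ : Matrix (Fin n) (Fin n) ℝ) (R : Matrix (Fin k) (Fin k) ℝ)
    (σ : ℝ) (hσ : 0 < σ) (hQ : Q.PosDef) (hR : R.PosDef) (hΨ : Ψ.PosDef)
    -- the stable policy K and its value matrix
    (K : Matrix (Fin k) (Fin n) ℝ) (hK : specRad (A - B * K) < 1)
    (P : Matrix (Fin n) (Fin n) ℝ) (hP : P.PosDef)
    (hPeq : P = Q + Kᵀ * R * K + (A - B * K)ᵀ * P * (A - B * K))
    -- the optimal stable policy K*, its value matrix and state covariance
    (Kstar : Matrix (Fin k) (Fin n) ℝ) (hKstar : specRad (A - B * Kstar) < 1)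
    (Pstar : Matrix (Fin n) (Fin n) ℝ) (hPstar : Pstar.PosDef)
    (hPstarEq : Pstar = Q + Kstarᵀ * R * Kstar
      + (A - B * Kstar)ᵀ * Pstar * (A - B * Kstar))
    (Sgstar : Matrix (Fin n) (Fin n) ℝ) (hSgstar : Sgstar.PosDef)
    (hSgstarEq : Sgstar = (Ψ + σ ^ 2 • (B * Bᵀ))
      + (A - B * Kstar) * Sgstar * (A - B * Kstar)ᵀ)
    -- K* minimizes J over all stable policies
    (hmin : ∀ (K' : Matrix (Fin k) (Fin n) ℝ) (P' : Matrix (Fin n) (Fin n) ℝ),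
      specRad (A - B * K') < 1 → P'.PosDef →
      P' = Q + K'ᵀ * R * K' + (A - B * K')ᵀ * P' * (A - B * K') →
      (Pstar * (Ψ + σ ^ 2 • (B * Bᵀ))).trace ≤ (P' * (Ψ + σ ^ 2 • (B * Bᵀ))).trace) :
    2 * (Sgstar * (K - Kstar)ᵀ * ((R + Bᵀ * P * B) * K - Bᵀ * P * A)).trace
      ≥ (P * (Ψ + σ ^ 2 • (B * Bᵀ))).trace - (Pstar * (Ψ + σ ^ 2 • (B * Bᵀ))).trace
    ∧ (P * (Ψ + σ ^ 2 • (B * Bᵀ))).trace - (Pstar * (Ψ + σ ^ 2 • (B * Bᵀ))).trace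
      ≥ 0 :=
  stmt_4_general A B Q Ψ R σ hR K hK P hP hPeq Kstar Pstar hPstarEq Sgstar hSgstar hSgstarEq hmin
end

section
/- Let K be a stable policy and set ρ = ρ(A−BK) < 1. Then ‖Σ_K‖ ≤ Tr(Σ_K) ≤ σ_min(Q)⁻¹J(K), ‖P_K‖ ≤ Tr(P_K) ≤ σ_min(Ψ)⁻¹J(K), and (1−ρ²)⁻¹ ≤ J(K)·σ_min(Ψ)⁻¹·σ_min(Q)⁻¹. -/
open Matrix Finset

/-! The Lyapunov equations for `P_K` and `Σ_K` are adjoint to each other, so pairing them gives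
`J(K) = Tr(P_K W) = Tr((Q + KᵀRK) Σ_K)` with `W = Ψ + σ²BBᵀ`; since `Q ≥ σ_min(Q)·I` and
`W ≥ σ_min(Ψ)·I`, this bounds both traces by `J(K)`. A positive semidefinite matrix has operator
norm equal to its largest eigenvalue, which is at most the trace. For the last bound, let `u` be an
eigenvector of `(A − BK)ᴴ` for an eigenvalue `z` with `|z| = ρ`: the equation for `Σ_K` gives
`u*Σ_K u = u*W u + ρ² u*Σ_K u`, so `σ_min(Ψ)‖u‖² ≤ (1 − ρ²) u*Σ_K u ≤ (1 − ρ²) Tr(Σ_K) ‖u‖²`,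
and `Tr(Σ_K) ≤ σ_min(Q)⁻¹ J(K)` finishes the proof. -/

open scoped ComplexOrder

namespace Matrix

section

variable {m : Type*} [Fintype m]

lemma trace_mul_eq_of_lyapunov {R : Type*} [CommRing R] {P C S W L : Matrix m m R}
    (hP : P = C + Lᵀ * P * L) (hS : S = W + L * S * Lᵀ) : (P * W).trace = (C * S).trace := by
  rw [eq_sub_of_add_eq hS.symm, eq_sub_of_add_eq hP.symm, mul_sub, sub_mul, trace_sub, trace_sub]
  congr 1
  rw [← mul_assoc, trace_mul_comm]
  simp only [mul_assoc]

lemma star_dotProduct_mulVec_eq_of_lyapunov {R : Type*} [CommRing R] [StarRing R]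
    {S W L : Matrix m m R} (h : S = W + L * S * Lᴴ) {u : m → R} {z : R} (hu : Lᴴ *ᵥ u = z • u) :
    star u ⬝ᵥ S *ᵥ u = star u ⬝ᵥ W *ᵥ u + star z * z * (star u ⬝ᵥ S *ᵥ u) := by
  have hL : star u ᵥ* L = star z • star u := by
    rw [← conjTranspose_conjTranspose L, ← star_mulVec, hu, star_smul]
  conv_lhs => rw [h]
  rw [add_mulVec, dotProduct_add, ← mulVec_mulVec, ← mulVec_mulVec, hu, dotProduct_mulVec _ L, hL,
    mulVec_smul, smul_dotProduct, dotProduct_smul, smul_eq_mul, smul_eq_mul, mul_assoc]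

end

variable {m 𝕜 : Type*} [Fintype m] [DecidableEq m] [RCLike 𝕜]

lemma IsHermitian.sub_smul_one_eq {A : Matrix m m 𝕜} (hA : A.IsHermitian) (c : ℝ) :
    A - (c : 𝕜) • 1 = Unitary.conjStarAlgAut 𝕜 _ hA.eigenvectorUnitary
      (diagonal (RCLike.ofReal ∘ (hA.eigenvalues - fun _ => c))) := by
  conv_lhs => rw [hA.spectral_theorem, ← map_one (Unitary.conjStarAlgAut 𝕜 _ hA.eigenvectorUnitary),
    ← map_smul, ← map_sub]
  congr 1
  ext i j
  by_cases h : i = j <;> simp [h, Algebra.algebraMap_eq_smul_one]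

lemma IsHermitian.posSemidef_sub_smul_one {A : Matrix m m 𝕜} (hA : A.IsHermitian) {c : ℝ}
    (hc : ∀ i, c ≤ hA.eigenvalues i) : (A - (c : 𝕜) • 1).PosSemidef := by
  rw [hA.sub_smul_one_eq, Unitary.conjStarAlgAut_apply,
    Unitary.isUnit_coe.posSemidef_star_right_conjugate_iff, posSemidef_diagonal_iff]
  intro i
  simpa using hc i

lemma IsHermitian.posSemidef_smul_one_sub {A : Matrix m m 𝕜} (hA : A.IsHermitian) {c : ℝ}
    (hc : ∀ i, hA.eigenvalues i ≤ c) : ((c : 𝕜) • 1 - A).PosSemidef := by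
  rw [← neg_sub, hA.sub_smul_one_eq, ← map_neg, Unitary.conjStarAlgAut_apply,
    Unitary.isUnit_coe.posSemidef_star_right_conjugate_iff, diagonal_neg, posSemidef_diagonal_iff]
  intro i
  simpa using hc i

lemma IsHermitian.minEig_eq_inf' [Nonempty m] {A : Matrix m m ℝ} (hA : A.IsHermitian) :
    minEig A = univ.inf' univ_nonempty hA.eigenvalues := by
  refine IsLeast.csInf_eq ⟨?_, ?_⟩
  · obtain ⟨i, -, hi⟩ := exists_mem_eq_inf' univ_nonempty hA.eigenvalues
    refine ⟨hA.eigenvectorBasis i, ?_, by rw [hi]; exact hA.mulVec_eigenvectorBasis i⟩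
    simpa using hA.eigenvectorBasis.orthonormal.ne_zero i
  · rintro r ⟨v, hv, hAv⟩
    have hpsd := (hA.posSemidef_sub_smul_one (c := univ.inf' univ_nonempty hA.eigenvalues)
      fun i => inf'_le _ (mem_univ i)).dotProduct_mulVec_nonneg v
    simp only [star_trivial, sub_mulVec, smul_mulVec, one_mulVec, hAv, dotProduct_sub,
      dotProduct_smul, smul_eq_mul, RCLike.ofReal_real_eq_id, id] at hpsd
    have hvv : 0 < v ⬝ᵥ v := by simpa using dotProduct_star_self_pos_iff.mpr hv
    nlinarith

lemma PosDef.minEig_pos [Nonempty m] {A : Matrix m m ℝ} (hA : A.PosDef) : 0 < minEig A := by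
  rw [hA.isHermitian.minEig_eq_inf', lt_inf'_iff]
  exact fun i _ => hA.eigenvalues_pos i

lemma IsHermitian.posSemidef_sub_minEig_smul_one [Nonempty m] {A : Matrix m m ℝ}
    (hA : A.IsHermitian) : (A - minEig A • 1).PosSemidef := by
  simpa using hA.posSemidef_sub_smul_one (c := minEig A) fun i => by
    rw [hA.minEig_eq_inf']; exact inf'_le _ (mem_univ i)

lemma PosSemidef.posSemidef_trace_smul_one_sub {A : Matrix m m ℝ} (hA : A.PosSemidef) :
    (A.trace • 1 - A).PosSemidef := by
  simpa using hA.isHermitian.posSemidef_smul_one_sub (c := A.trace) fun i => by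
    rw [hA.isHermitian.trace_eq_sum_eigenvalues]
    simpa using single_le_sum (fun j _ => hA.eigenvalues_nonneg j) (mem_univ i)

open scoped MatrixOrder in
lemma PosSemidef.trace_mul_nonneg_s5 {A B : Matrix m m 𝕜} (hA : A.PosSemidef) (hB : B.PosSemidef) :
    0 ≤ (A * B).trace := by
  obtain ⟨C, rfl⟩ := CStarAlgebra.nonneg_iff_eq_star_mul_self.mp hA.nonneg
  rw [mul_assoc, trace_mul_comm, star_eq_conjTranspose]
  exact (hB.mul_mul_conjTranspose_same C).trace_nonneg

open scoped MatrixOrder in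
lemma PosSemidef.map_ofReal {A : Matrix m m ℝ} (hA : A.PosSemidef) :
    (A.map ((↑) : ℝ → 𝕜)).PosSemidef := by
  obtain ⟨C, rfl⟩ := CStarAlgebra.nonneg_iff_eq_star_mul_self.mp hA.nonneg
  have : (star C * C).map ((↑) : ℝ → 𝕜) = (C.map ((↑) : ℝ → 𝕜))ᴴ * C.map ((↑) : ℝ → 𝕜) := by
    rw [Matrix.map_mul, star_eq_conjTranspose,
      conjTranspose_map _ fun x => (RCLike.conj_ofReal x).symm]
  rw [this]
  exact posSemidef_conjTranspose_mul_self _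

lemma minEig_mul_trace_le_trace_add_mul [Nonempty m] {A C S : Matrix m m ℝ} (hA : A.IsHermitian)
    (hC : C.PosSemidef) (hS : S.PosSemidef) : minEig A * S.trace ≤ ((A + C) * S).trace := by
  have h₁ := hA.posSemidef_sub_minEig_smul_one.trace_mul_nonneg_s5 hS
  have h₂ := hC.trace_mul_nonneg_s5 hS
  rw [sub_mul, trace_sub, smul_mul_assoc, one_mul, trace_smul, smul_eq_mul] at h₁
  rw [add_mul, trace_add]
  linarith

open scoped Matrix.Norms.L2Operator in
lemma PosSemidef.sNorm_le_trace {A : Matrix m m ℝ} (hA : A.PosSemidef) : sNorm A ≤ A.trace := by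
  have hA' := hA.isHermitian
  calc sNorm A = ‖A‖ := rfl
    _ = ‖(diagonal (RCLike.ofReal ∘ hA'.eigenvalues) : Matrix m m ℝ)‖ := by
      conv_lhs => rw [hA'.spectral_theorem]
      rw [Unitary.conjStarAlgAut_apply, ← Unitary.coe_star, CStarRing.norm_mul_coe_unitary,
        CStarRing.norm_coe_unitary_mul]
    _ = ‖(RCLike.ofReal ∘ hA'.eigenvalues : m → ℝ)‖ := l2_opNorm_diagonal _
    _ ≤ ∑ i, hA'.eigenvalues i := by
      refine (pi_norm_le_iff_of_nonneg <| sum_nonneg fun i _ => hA.eigenvalues_nonneg i).mpr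
        fun i => ?_
      simpa [abs_of_nonneg (hA.eigenvalues_nonneg i)] using
        single_le_sum (fun j _ => hA.eigenvalues_nonneg j) (mem_univ i)
    _ = A.trace := by simp [hA'.trace_eq_sum_eigenvalues]

lemma mem_spectrum_transpose_iff {K : Type*} [Field K] {A : Matrix m m K} {z : K} :
    z ∈ spectrum K Aᵀ ↔ z ∈ spectrum K A := by
  simp only [mem_spectrum_iff_isRoot_charpoly, charpoly_transpose]

lemma exists_mulVec_eq_smul_of_mem_spectrum {K : Type*} [Field K] {A : Matrix m m K} {z : K}
    (hz : z ∈ spectrum K A) : ∃ u, u ≠ 0 ∧ A *ᵥ u = z • u := by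
  rw [← spectrum_toLin', ← Module.End.hasEigenvalue_iff_mem_spectrum] at hz
  obtain ⟨u, hu⟩ := hz.exists_hasEigenvector
  exact ⟨u, hu.2, by simpa using hu.apply_eq_smul⟩

lemma le_one_sub_norm_sq_mul_of_lyapunov {S W L : Matrix m m 𝕜} (h : S = W + L * S * Lᴴ)
    {u : m → 𝕜} (hu₀ : u ≠ 0) {z : 𝕜} (hu : Lᴴ *ᵥ u = z • u) (hz : ‖z‖ ≤ 1) {a b : ℝ}
    (ha : (W - (a : 𝕜) • 1).PosSemidef) (hb : ((b : 𝕜) • 1 - S).PosSemidef) :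
    a ≤ (1 - ‖z‖ ^ 2) * b := by
  set N := RCLike.re (star u ⬝ᵥ u)
  set q := RCLike.re (star u ⬝ᵥ S *ᵥ u)
  set w := RCLike.re (star u ⬝ᵥ W *ᵥ u)
  have hN : 0 < N := by simpa using PosDef.one.re_dotProduct_pos hu₀
  have hqw : q = w + ‖z‖ ^ 2 * q := by
    have := congrArg RCLike.re (star_dotProduct_mulVec_eq_of_lyapunov h hu)
    rwa [RCLike.star_def, RCLike.conj_mul, ← RCLike.ofReal_pow, map_add,
      RCLike.re_ofReal_mul] at this
  have hw : a * N ≤ w := by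
    have := ha.re_dotProduct_nonneg u
    simp only [sub_mulVec, smul_mulVec, one_mulVec, dotProduct_sub, dotProduct_smul, smul_eq_mul,
      map_sub, RCLike.re_ofReal_mul] at this
    linarith
  have hq : q ≤ b * N := by
    have := hb.re_dotProduct_nonneg u
    simp only [sub_mulVec, smul_mulVec, one_mulVec, dotProduct_sub, dotProduct_smul, smul_eq_mul,
      map_sub, RCLike.re_ofReal_mul] at this
    linarith
  have hz' : 0 ≤ 1 - ‖z‖ ^ 2 := by nlinarith [norm_nonneg z]
  have : a * N ≤ (1 - ‖z‖ ^ 2) * b * N := by nlinarith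
  exact le_of_mul_le_mul_right this hN

end Matrix

open Matrix

lemma exists_mem_spectrum_norm_eq_specRad {d : ℕ} (hd : 0 < d) (M : Matrix (Fin d) (Fin d) ℝ) :
    ∃ z ∈ spectrum ℂ (M.map Complex.ofReal), ‖z‖ = specRad M := by
  have : Nonempty (Fin d) := ⟨⟨0, hd⟩⟩
  have hT : {r : ℝ | ∃ z ∈ spectrum ℂ (M.map Complex.ofReal), r = ‖z‖}
      = (‖·‖) '' spectrum ℂ (M.map Complex.ofReal) := by
    ext r; simp [eq_comm]
  obtain ⟨z, hz, hzr⟩ : specRad M ∈ (‖·‖) '' spectrum ℂ (M.map Complex.ofReal) := by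
    rw [specRad, hT]
    exact ((spectrum.nonempty_of_isAlgClosed_of_finiteDimensional ℂ _).image _).csSup_mem
      ((finite_spectrum _).image _)
  exact ⟨z, hz, hzr⟩

lemma le_one_sub_specRad_sq_mul_trace {d : ℕ} (hd : 0 < d) {S W L : Matrix (Fin d) (Fin d) ℝ}
    (h : S = W + L * S * Lᵀ) (hS : S.PosSemidef) (hL : specRad L ≤ 1) {a : ℝ}
    (ha : (W - a • 1).PosSemidef) : a ≤ (1 - specRad L ^ 2) * S.trace := by
  obtain ⟨z, hz, hzρ⟩ := exists_mem_spectrum_norm_eq_specRad hd L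
  have hLc : (L.map Complex.ofReal)ᴴ = (L.map Complex.ofReal)ᵀ := by
    ext i j; simp
  obtain ⟨u, hu₀, hu⟩ := exists_mulVec_eq_smul_of_mem_spectrum (mem_spectrum_transpose_iff.mpr hz)
  have haℂ : (W.map Complex.ofReal - (a : ℂ) • 1).PosSemidef := by
    simpa [Matrix.map_sub, Matrix.map_smul, Matrix.map_one] using ha.map_ofReal (𝕜 := ℂ)
  have hSℂ : ((S.trace : ℂ) • 1 - S.map Complex.ofReal).PosSemidef := by
    simpa [Matrix.map_sub, Matrix.map_smul, Matrix.map_one] using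
      hS.posSemidef_trace_smul_one_sub.map_ofReal (𝕜 := ℂ)
  rw [← hzρ] at hL ⊢
  refine le_one_sub_norm_sq_mul_of_lyapunov ?_ hu₀ (hLc ▸ hu) hL haℂ hSℂ
  conv_lhs => rw [h]
  rw [hLc, ← transpose_map, ← Complex.coe_algebraMap, Matrix.map_add _ (map_add _), Matrix.map_mul,
    Matrix.map_mul]

theorem stmt_5_general {n k : ℕ} (hn : 0 < n)
    (A : Matrix (Fin n) (Fin n) ℝ) (B : Matrix (Fin n) (Fin k) ℝ)
    (Q Ψ : Matrix (Fin n) (Fin n) ℝ) (R : Matrix (Fin k) (Fin k) ℝ)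
    (σ : ℝ) (hQ : Q.PosDef) (hR : R.PosDef) (hΨ : Ψ.PosDef)
    (K : Matrix (Fin k) (Fin n) ℝ) (hK : specRad (A - B * K) < 1)
    (P Sg : Matrix (Fin n) (Fin n) ℝ) (hP : P.PosDef) (hSg : Sg.PosDef)
    (hPeq : P = Q + Kᵀ * R * K + (A - B * K)ᵀ * P * (A - B * K))
    (hSgEq : Sg = (Ψ + σ ^ 2 • (B * Bᵀ)) + (A - B * K) * Sg * (A - B * K)ᵀ) :
    sNorm Sg ≤ Sg.trace
    ∧ Sg.trace ≤ (minEig Q)⁻¹ * (P * (Ψ + σ ^ 2 • (B * Bᵀ))).trace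
    ∧ sNorm P ≤ P.trace
    ∧ P.trace ≤ (minEig Ψ)⁻¹ * (P * (Ψ + σ ^ 2 • (B * Bᵀ))).trace
    ∧ (1 - specRad (A - B * K) ^ 2)⁻¹
        ≤ (P * (Ψ + σ ^ 2 • (B * Bᵀ))).trace * (minEig Ψ)⁻¹ * (minEig Q)⁻¹ := by
  have : Nonempty (Fin n) := ⟨⟨0, hn⟩⟩
  set J := (P * (Ψ + σ ^ 2 • (B * Bᵀ))).trace with hJ
  have hBB : (σ ^ 2 • (B * Bᵀ)).PosSemidef := by
    simpa using (posSemidef_self_mul_conjTranspose B).smul (sq_nonneg σ)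
  have hKRK : (Kᵀ * R * K).PosSemidef := by
    simpa using hR.posSemidef.conjTranspose_mul_mul_same K
  have hSgJ : minEig Q * Sg.trace ≤ J := by
    rw [hJ, trace_mul_eq_of_lyapunov hPeq hSgEq]
    exact minEig_mul_trace_le_trace_add_mul hQ.isHermitian hKRK hSg.posSemidef
  have hPJ : minEig Ψ * P.trace ≤ J := by
    rw [hJ, trace_mul_comm]
    exact minEig_mul_trace_le_trace_add_mul hΨ.isHermitian hBB hP.posSemidef
  have hρ : minEig Ψ ≤ (1 - specRad (A - B * K) ^ 2) * Sg.trace := by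
    refine le_one_sub_specRad_sq_mul_trace hn hSgEq hSg.posSemidef hK.le ?_
    rw [add_sub_right_comm]
    exact hΨ.isHermitian.posSemidef_sub_minEig_smul_one.add hBB
  have hmQ := hQ.minEig_pos
  have hmΨ := hΨ.minEig_pos
  have hρ' : 0 < 1 - specRad (A - B * K) ^ 2 :=
    pos_of_mul_pos_left (hmΨ.trans_le hρ) hSg.posSemidef.trace_nonneg
  refine ⟨hSg.posSemidef.sNorm_le_trace, (le_inv_mul_iff₀ hmQ).2 hSgJ, hP.posSemidef.sNorm_le_trace,
    (le_inv_mul_iff₀ hmΨ).2 hPJ, ?_⟩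
  rw [← div_eq_mul_inv, ← div_eq_mul_inv, div_div, le_div_iff₀ (by positivity),
    inv_mul_le_iff₀ hρ']
  calc minEig Ψ * minEig Q ≤ (1 - specRad (A - B * K) ^ 2) * Sg.trace * minEig Q := by gcongr
    _ ≤ (1 - specRad (A - B * K) ^ 2) * J := by rw [mul_assoc, mul_comm Sg.trace]; gcongr

/-- for stable `K` with `ρ = ρ(A−BK) < 1`:
`‖Σ_K‖ ≤ Tr(Σ_K) ≤ σ_min(Q)⁻¹J(K)`, `‖P_K‖ ≤ Tr(P_K) ≤ σ_min(Ψ)⁻¹J(K)`, and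
`(1−ρ²)⁻¹ ≤ J(K)·σ_min(Ψ)⁻¹·σ_min(Q)⁻¹`. -/
theorem stmt_5 {n k : ℕ} (hn : 0 < n) (hk : 0 < k)
    (A : Matrix (Fin n) (Fin n) ℝ) (B : Matrix (Fin n) (Fin k) ℝ)
    (Q Ψ : Matrix (Fin n) (Fin n) ℝ) (R : Matrix (Fin k) (Fin k) ℝ)
    (σ : ℝ) (hσ : 0 < σ) (hQ : Q.PosDef) (hR : R.PosDef) (hΨ : Ψ.PosDef)
    (K : Matrix (Fin k) (Fin n) ℝ) (hK : specRad (A - B * K) < 1)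
    (P Sg : Matrix (Fin n) (Fin n) ℝ) (hP : P.PosDef) (hSg : Sg.PosDef)
    (hPeq : P = Q + Kᵀ * R * K + (A - B * K)ᵀ * P * (A - B * K))
    (hSgEq : Sg = (Ψ + σ ^ 2 • (B * Bᵀ)) + (A - B * K) * Sg * (A - B * K)ᵀ) :
    sNorm Sg ≤ Sg.trace
    ∧ Sg.trace ≤ (minEig Q)⁻¹ * (P * (Ψ + σ ^ 2 • (B * Bᵀ))).trace
    ∧ sNorm P ≤ P.trace
    ∧ P.trace ≤ (minEig Ψ)⁻¹ * (P * (Ψ + σ ^ 2 • (B * Bᵀ))).trace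
    ∧ (1 - specRad (A - B * K) ^ 2)⁻¹
        ≤ (P * (Ψ + σ ^ 2 • (B * Bᵀ))).trace * (minEig Ψ)⁻¹ * (minEig Q)⁻¹ :=
  stmt_5_general hn A B Q Ψ R σ hQ hR hΨ K hK P Sg hP hSg hPeq hSgEq
end

section
/- (Stability of the exact natural gradient step.) Let K be a stable policy and let η ≥ 0 satisfy η ≤ ‖R + BᵀP_KB‖⁻¹. Then the policy K' = K − 2ηE_K is stable, i.e., ρ(A − BK') < 1. -/
/-!
Write `G = R + BᵀPB`, `E = GK - BᵀPA` and `K' = K - 2ηE`. Expanding the Lyapunov equation of `K`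
gives `P - (A - BK')ᵀP(A - BK') = Q + K'ᵀRK' + 4η Eᵀ(I - ηG)E`, and `I - ηG ⪰ 0` because
`η‖G‖ ≤ 1`. So `P ≻ 0` is a strict Lyapunov certificate for `A - BK'`: for an eigenpair `Mv = zv`
the gap's quadratic form at `v` equals `(1 - |z|²) v*Pv`, which forces `|z| < 1`.
-/

open Matrix Finset

open scoped ComplexOrder

lemma Matrix.PosSemidef.transpose_mul_mul_same {m n : Type*} [Fintype m] [Fintype n]
    {A : Matrix n n ℝ} (hA : A.PosSemidef) (B : Matrix n m ℝ) : (Bᵀ * A * B).PosSemidef := by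
  simpa only [conjTranspose_eq_transpose_of_trivial] using hA.conjTranspose_mul_mul_same B

lemma Matrix.PosDef.map_ofReal {n : Type*} [Fintype n] {X : Matrix n n ℝ} (hX : X.PosDef) :
    (X.map Complex.ofReal).PosDef := by
  refine .of_dotProduct_mulVec_pos (hX.isHermitian.map _ fun _ => by simp) fun v hv => ?_
  set x : n → ℝ := fun i => (v i).re
  set y : n → ℝ := fun i => (v i).im
  have hre : (star v ⬝ᵥ X.map Complex.ofReal *ᵥ v).re = x ⬝ᵥ X *ᵥ x + y ⬝ᵥ X *ᵥ y := by
    simp [dotProduct, mulVec, Complex.re_sum, Finset.mul_sum, ← Finset.sum_add_distrib, x, y]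
  have him : (star v ⬝ᵥ X.map Complex.ofReal *ᵥ v).im = 0 := by
    simp only [dotProduct, Pi.star_apply, RCLike.star_def, mulVec, map_apply, Finset.mul_sum,
      Complex.im_sum, Complex.mul_im, Complex.conj_re, Complex.ofReal_re, Complex.ofReal_im,
      zero_mul, add_zero, Complex.conj_im, Complex.mul_re, sub_zero, neg_mul,
      ← sub_eq_add_neg, Finset.sum_sub_distrib, sub_eq_zero]
    rw [Finset.sum_comm]
    refine Finset.sum_congr rfl fun i _ => Finset.sum_congr rfl fun j _ => ?_
    rw [← hX.isHermitian.apply i j, star_trivial]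
    ring
  have hxy : x ≠ 0 ∨ y ≠ 0 := by
    by_contra! h
    exact hv (funext fun i => Complex.ext (congrFun h.1 i) (congrFun h.2 i))
  refine Complex.pos_iff.2 ⟨?_, him.symm⟩
  rw [hre]
  have hx := hX.posSemidef.dotProduct_mulVec_nonneg x
  have hy := hX.posSemidef.dotProduct_mulVec_nonneg y
  simp only [star_trivial] at hx hy
  rcases hxy with h | h
  · exact add_pos_of_pos_of_nonneg (by simpa using hX.dotProduct_mulVec_pos h) hy
  · exact add_pos_of_nonneg_of_pos hx (by simpa using hX.dotProduct_mulVec_pos h)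

lemma Matrix.exists_mulVec_eq_smul_of_mem_spectrum_s7 {n 𝕜 : Type*} [Fintype n] [DecidableEq n]
    [Field 𝕜] {M : Matrix n n 𝕜} {z : 𝕜} (hz : z ∈ spectrum 𝕜 M) :
    ∃ v, v ≠ 0 ∧ M *ᵥ v = z • v := by
  rw [← spectrum_toLin', ← Module.End.hasEigenvalue_iff_mem_spectrum] at hz
  obtain ⟨v, hv⟩ := hz.exists_hasEigenvector
  exact ⟨v, hv.2, by simpa using hv.apply_eq_smul⟩

lemma norm_lt_one_of_mem_spectrum_of_lyapunov {n : Type*} [Fintype n] [DecidableEq n]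
    {M P : Matrix n n ℝ} (hP : P.PosDef) (hgap : (P - Mᵀ * P * M).PosDef) {z : ℂ}
    (hz : z ∈ spectrum ℂ (M.map Complex.ofReal)) : ‖z‖ < 1 := by
  obtain ⟨v, hv, hMv⟩ := exists_mulVec_eq_smul_of_mem_spectrum_s7 hz
  set Mc := M.map Complex.ofReal
  set Pc := P.map Complex.ofReal
  have hq : 0 < star v ⬝ᵥ Pc *ᵥ v := hP.map_ofReal.dotProduct_mulVec_pos hv
  have hgap_map : (P - Mᵀ * P * M).map Complex.ofReal = Pc - Mcᴴ * Pc * Mc := by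
    ext i j
    simp [Pc, Mc, mul_apply]
  have hform : star v ⬝ᵥ (Pc - Mcᴴ * Pc * Mc) *ᵥ v
      = (1 - (Complex.normSq z : ℂ)) * (star v ⬝ᵥ Pc *ᵥ v) := by
    rw [sub_mulVec, dotProduct_sub, ← mulVec_mulVec, ← mulVec_mulVec, hMv,
      dotProduct_mulVec (star v) Mcᴴ, ← star_mulVec, hMv, mulVec_smul, star_smul,
      smul_dotProduct, dotProduct_smul, smul_eq_mul, smul_eq_mul, Complex.star_def,
      ← Complex.mul_conj]
    ring
  have hpos := hgap.map_ofReal.dotProduct_mulVec_pos hv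
  rw [hgap_map, hform] at hpos
  have hns : Complex.normSq z < 1 := by
    exact_mod_cast sub_pos.1 ((pos_iff_pos_of_mul_pos hpos).2 hq)
  rwa [Complex.normSq_eq_norm_sq, sq_lt_one_iff₀ (norm_nonneg z)] at hns

lemma specRad_lt_one_of_forall_norm_lt_one {d : ℕ} {M : Matrix (Fin d) (Fin d) ℝ}
    (h : ∀ z ∈ spectrum ℂ (M.map Complex.ofReal), ‖z‖ < 1) : specRad M < 1 := by
  have hset : {r : ℝ | ∃ z ∈ spectrum ℂ (M.map Complex.ofReal), r = ‖z‖}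
      = (‖·‖) '' spectrum ℂ (M.map Complex.ofReal) := by
    ext r
    simp [eq_comm]
  rw [specRad, hset]
  rcases (spectrum ℂ (M.map Complex.ofReal)).eq_empty_or_nonempty with hempty | hne
  · simp [hempty]
  · rw [((Matrix.finite_spectrum _).image _).csSup_lt_iff (hne.image _)]
    rintro _ ⟨z, hz, rfl⟩
    exact h z hz

theorem specRad_lt_one_of_lyapunov {d : ℕ} {M P : Matrix (Fin d) (Fin d) ℝ} (hP : P.PosDef)
    (hgap : (P - Mᵀ * P * M).PosDef) : specRad M < 1 :=
  specRad_lt_one_of_forall_norm_lt_one fun _ hz =>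
    norm_lt_one_of_mem_spectrum_of_lyapunov hP hgap hz

lemma dotProduct_mulVec_le_sNorm_mul {n : Type*} [Fintype n] [DecidableEq n]
    (G : Matrix n n ℝ) (x : n → ℝ) : x ⬝ᵥ G *ᵥ x ≤ sNorm G * (x ⬝ᵥ x) := by
  set v : EuclideanSpace ℝ n := WithLp.toLp 2 x
  have hGv : inner ℝ v (toEuclideanLin G v) = x ⬝ᵥ G *ᵥ x := by
    simp [v, EuclideanSpace.inner_toLp_toLp, toLin'_apply, dotProduct_comm]
  have hvv : inner ℝ v v = x ⬝ᵥ x := by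
    simp only [v, EuclideanSpace.inner_toLp_toLp, star_trivial]
  have hop : ‖toEuclideanLin G v‖ ≤ sNorm G * ‖v‖ :=
    (LinearMap.toContinuousLinearMap (toEuclideanLin G)).le_opNorm v
  rw [← hGv, ← hvv, real_inner_self_eq_norm_mul_norm]
  calc inner ℝ v (toEuclideanLin G v) ≤ ‖v‖ * ‖toEuclideanLin G v‖ := real_inner_le_norm _ _
    _ ≤ ‖v‖ * (sNorm G * ‖v‖) := mul_le_mul_of_nonneg_left hop (norm_nonneg v)
    _ = sNorm G * (‖v‖ * ‖v‖) := by ring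

lemma posSemidef_one_sub_smul_of_le_inv_sNorm {n : Type*} [Fintype n] [DecidableEq n]
    {G : Matrix n n ℝ} (hG : G.IsHermitian) {η : ℝ} (hη0 : 0 ≤ η) (hη : η ≤ (sNorm G)⁻¹) :
    (1 - η • G).PosSemidef := by
  have hηG : η * sNorm G ≤ 1 := by
    have hs : 0 ≤ sNorm G := norm_nonneg _
    rcases hs.eq_or_lt with h | h
    · rw [← h, mul_zero]
      exact zero_le_one
    · exact (le_div_iff₀ h).1 (by rwa [one_div])
  refine .of_dotProduct_mulVec_nonneg (isHermitian_one.sub (hG.smul (.all η))) fun x => ?_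
  simp only [star_trivial, sub_mulVec, one_mulVec, smul_mulVec, dotProduct_sub,
    dotProduct_smul, smul_eq_mul, sub_nonneg]
  have hxx : 0 ≤ x ⬝ᵥ x := Finset.sum_nonneg fun i _ => mul_self_nonneg (x i)
  calc η * (x ⬝ᵥ G *ᵥ x) ≤ η * (sNorm G * (x ⬝ᵥ x)) :=
        mul_le_mul_of_nonneg_left (dotProduct_mulVec_le_sNorm_mul G x) hη0
    _ = η * sNorm G * (x ⬝ᵥ x) := by ring
    _ ≤ x ⬝ᵥ x := mul_le_of_le_one_left hxx hηG

theorem lyapunov_gap_natural_gradient_step {m ι α : Type*} [Fintype m] [Fintype ι]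
    [DecidableEq ι] [CommRing α]
    {A Q P : Matrix m m α} {B : Matrix m ι α} {R G : Matrix ι ι α} {K E : Matrix ι m α}
    (hPt : Pᵀ = P) (hRt : Rᵀ = R)
    (hPeq : P = Q + Kᵀ * R * K + (A - B * K)ᵀ * P * (A - B * K))
    (hG : G = R + Bᵀ * P * B) (hE : E = G * K - Bᵀ * P * A) (η : α) :
    P - (A - B * (K - (2 * η) • E))ᵀ * P * (A - B * (K - (2 * η) • E)) =
      Q + (K - (2 * η) • E)ᵀ * R * (K - (2 * η) • E) + (4 * η) • (Eᵀ * (1 - η • G) * E) := by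
  nth_rewrite 1 [hPeq]
  simp only [transpose_sub, transpose_mul, transpose_smul, transpose_add, transpose_transpose,
    hPt, hRt, hG, hE, Matrix.sub_mul, Matrix.mul_sub, Matrix.add_mul, Matrix.mul_add,
    Matrix.smul_mul, Matrix.mul_smul, Matrix.mul_assoc, Matrix.mul_one, smul_sub, smul_add,
    smul_smul]
  module

theorem stmt_7_general {n k : ℕ}
    (A : Matrix (Fin n) (Fin n) ℝ) (B : Matrix (Fin n) (Fin k) ℝ)
    (Q : Matrix (Fin n) (Fin n) ℝ) (R : Matrix (Fin k) (Fin k) ℝ)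
    (hQ : Q.PosDef) (hR : R.PosDef)
    (K : Matrix (Fin k) (Fin n) ℝ)
    (P : Matrix (Fin n) (Fin n) ℝ) (hP : P.PosDef)
    (hPeq : P = Q + Kᵀ * R * K + (A - B * K)ᵀ * P * (A - B * K))
    (η : ℝ) (hη0 : 0 ≤ η) (hη : η ≤ (sNorm (R + Bᵀ * P * B))⁻¹) :
    specRad (A - B * (K - (2 * η) • ((R + Bᵀ * P * B) * K - Bᵀ * P * A))) < 1 := by
  have hG : (R + Bᵀ * P * B).PosDef := hR.add_posSemidef (hP.posSemidef.transpose_mul_mul_same B)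
  have hstep := posSemidef_one_sub_smul_of_le_inv_sNorm hG.isHermitian hη0 hη
  refine specRad_lt_one_of_lyapunov hP ?_
  rw [lyapunov_gap_natural_gradient_step (isHermitian_iff_isSymm.1 hP.isHermitian).eq
    (isHermitian_iff_isSymm.1 hR.isHermitian).eq hPeq rfl rfl]
  exact (hQ.add_posSemidef (hR.posSemidef.transpose_mul_mul_same _)).add_posSemidef
    ((hstep.transpose_mul_mul_same _).smul (by positivity))

/-- Stability of the exact natural gradient step:
if `0 ≤ η ≤ ‖R + BᵀP_KB‖⁻¹` then `K' = K − 2ηE_K` is stable. -/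
theorem stmt_7 {n k : ℕ} (hn : 0 < n) (hk : 0 < k)
    (A : Matrix (Fin n) (Fin n) ℝ) (B : Matrix (Fin n) (Fin k) ℝ)
    (Q Ψ : Matrix (Fin n) (Fin n) ℝ) (R : Matrix (Fin k) (Fin k) ℝ)
    (σ : ℝ) (hσ : 0 < σ) (hQ : Q.PosDef) (hR : R.PosDef) (hΨ : Ψ.PosDef)
    (K : Matrix (Fin k) (Fin n) ℝ) (hK : specRad (A - B * K) < 1)
    (P : Matrix (Fin n) (Fin n) ℝ) (hP : P.PosDef)
    (hPeq : P = Q + Kᵀ * R * K + (A - B * K)ᵀ * P * (A - B * K))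
    (η : ℝ) (hη0 : 0 ≤ η) (hη : η ≤ (sNorm (R + Bᵀ * P * B))⁻¹) :
    specRad (A - B * (K - (2 * η) • ((R + Bᵀ * P * B) * K - Bᵀ * P * A))) < 1 :=
  stmt_7_general A B Q R hQ hR K P hP hPeq η hη0 hη
end
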